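/- arXiv:1012.0984 — 2 statements merged into one kernel-verified Lean document; each statement's English description precedes it below -/
import Mathlib

section
/- Let G be a finite group with a minimal normal subgroup W of order m. Suppose G is isomorphic to a quotient H/N where H is a subgroup of a direct product H₁ × ... × Hₛ of finite groups. Then |Hᵢ| ≥ m for some index i. -/
/-!
Pull back the filtration of `H₁ × ⋯ × Hₛ` by the subgroups `Kᵢ` of tuples vanishing in the first
`i` coordinates to `G` through the surjection `H → H/N ≃ G`. This gives normal subgroups
`G = V₀, V₁, …, Vₛ = 1`. If `i` is the last index with `W ≤ Vᵢ`, minimality of `W` forces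
`W ∩ Vᵢ₊₁ = 1`, so `W` embeds into `Vᵢ / Vᵢ₊₁`, a quotient of `Kᵢ / Kᵢ₊₁ ↪ Hᵢ`.
-/

open Subgroup

theorem Subgroup.pi_normal {η : Type*} {f : η → Type*} [∀ i, Group (f i)] (I : Set η)
    (H : ∀ i, Subgroup (f i)) [hH : ∀ i, (H i).Normal] : (pi I H).Normal where
  conj_mem _ hp g i hi := (hH i).conj_mem _ (hp i hi) (g i)

theorem exists_le_and_inf_eq_bot_of_minimal_normal {G : Type*} [Group G] {W : Subgroup G}
    (hWnormal : W.Normal) (hWne : W ≠ ⊥)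
    (hWmin : ∀ W' : Subgroup G, W'.Normal → W' ≤ W → W' ≠ ⊥ → W' = W)
    {s : ℕ} (V : ℕ → Subgroup G) (hV : ∀ i, (V i).Normal) (h0 : V 0 = ⊤) (hs : V s = ⊥) :
    ∃ i < s, W ≤ V i ∧ W ⊓ V (i + 1) = ⊥ := by
  classical
  have hex : ∃ n, ¬ W ≤ V n := ⟨s, by rwa [hs, le_bot_iff]⟩
  obtain ⟨i, hi⟩ : ∃ i, Nat.find hex = i + 1 :=
    Nat.exists_eq_add_one.mpr <| Nat.pos_of_ne_zero fun h => by
      simpa [h, h0] using Nat.find_spec hex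
  have hWVi : W ≤ V i := not_not.mp <| Nat.find_min hex (by omega)
  have hWVi' : ¬ W ≤ V (i + 1) := hi ▸ Nat.find_spec hex
  refine ⟨i, by have := Nat.find_min' hex (show ¬ W ≤ V s by rwa [hs, le_bot_iff]); omega,
    hWVi, ?_⟩
  by_contra hne
  exact hWVi' <| (hWmin _ (normal_inf_normal W _) inf_le_left hne).symm ▸ inf_le_right

theorem Subgroup.card_le_of_le_map_of_inf_ker_le {H G A : Type*} [Group H] [Group G] [Group A]
    [Finite A] (φ : H →* G) (ψ : H →* A) {W : Subgroup G} {K K' : Subgroup H}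
    (hW : W ≤ K.map φ) (hWK' : W ⊓ K'.map φ = ⊥) (hker : K ⊓ ψ.ker ≤ K') :
    Nat.card W ≤ Nat.card A := by
  choose x hxK hxφ using fun w : W => hW w.2
  refine Nat.card_le_card_of_injective (fun w => ψ (x w)) fun w w' hww => Subtype.ext ?_
  have hmem : x w * (x w')⁻¹ ∈ K' :=
    hker <| mem_inf.mpr ⟨mul_mem (hxK w) (inv_mem (hxK w')), by simp [hww]⟩
  have hbot : (w : G) * (w' : G)⁻¹ ∈ W ⊓ K'.map φ :=
    mem_inf.mpr ⟨mul_mem w.2 (inv_mem w'.2), _, hmem, by simp [hxφ]⟩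
  rwa [hWK', mem_bot, mul_inv_eq_one] at hbot

section vanishingBelow

variable {s : ℕ} (Hs : Fin s → Type*) [∀ i, Group (Hs i)]

def vanishingBelow (i : ℕ) : Subgroup (∀ j, Hs j) :=
  pi {j | (j : ℕ) < i} fun _ => ⊥

instance vanishingBelow_normal (i : ℕ) : (vanishingBelow Hs i).Normal :=
  pi_normal _ _

theorem vanishingBelow_zero : vanishingBelow Hs 0 = ⊤ := by
  simpa [vanishingBelow] using pi_empty (fun j => (⊥ : Subgroup (Hs j)))

theorem vanishingBelow_eq_bot : vanishingBelow Hs s = ⊥ := by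
  simpa [vanishingBelow] using pi_bot (f := Hs)

theorem vanishingBelow_inf_ker_le (i : Fin s) :
    vanishingBelow Hs i ⊓ (Pi.evalMonoidHom Hs i).ker ≤ vanishingBelow Hs (i + 1) := by
  rintro x ⟨hx, hxi⟩ j (hj : (j : ℕ) < i + 1)
  rcases Nat.lt_succ_iff_lt_or_eq.mp hj with hj | hj
  · exact hx j hj
  · exact Fin.ext hj ▸ hxi

end vanishingBelow

theorem stmt0_general {G : Type*} [Group G] (W : Subgroup G) (hWnormal : W.Normal)
    (hWne : W ≠ ⊥)
    (hWmin : ∀ W' : Subgroup G, W'.Normal → W' ≤ W → W' ≠ ⊥ → W' = W)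
    {s : ℕ} (Hs : Fin s → Type*) [∀ i, Group (Hs i)] [∀ i, Finite (Hs i)]
    (H : Subgroup (∀ i, Hs i)) (N : Subgroup H) [N.Normal]
    (e : G ≃* H ⧸ N) :
    ∃ i, Nat.card W ≤ Nat.card (Hs i) := by
  set φ : H →* G := e.symm.toMonoidHom.comp (QuotientGroup.mk' N)
  have hφ : Function.Surjective φ := e.symm.surjective.comp (QuotientGroup.mk'_surjective N)
  set K : ℕ → Subgroup H := fun i => (vanishingBelow Hs i).comap H.subtype
  obtain ⟨i, hi, hWV, hWV'⟩ :=
    exists_le_and_inf_eq_bot_of_minimal_normal (s := s) hWnormal hWne hWmin (fun i => (K i).map φ)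
      (fun i => ((vanishingBelow_normal Hs i).comap _).map φ hφ)
      (by simp [K, vanishingBelow_zero, map_top_of_surjective φ hφ])
      (by simp [K, vanishingBelow_eq_bot])
  refine ⟨⟨i, hi⟩, card_le_of_le_map_of_inf_ker_le φ
    ((Pi.evalMonoidHom Hs ⟨i, hi⟩).comp H.subtype) hWV hWV' ?_⟩
  rw [← MonoidHom.comap_ker, ← comap_inf]
  exact comap_mono (vanishingBelow_inf_ker_le Hs ⟨i, hi⟩)

/-- Let `G` be a finite group with a minimal normal subgroup `W` of order `m`.
Suppose `G` is isomorphic to a quotient `H/N` where `H` is a subgroup of a direct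
product `H₁ × ... × Hₛ` of finite groups.  Then `|Hᵢ| ≥ m` for some index `i`. -/
theorem stmt0 {G : Type*} [Group G] [Finite G] (W : Subgroup G) (hWnormal : W.Normal)
    (hWne : W ≠ ⊥)
    (hWmin : ∀ W' : Subgroup G, W'.Normal → W' ≤ W → W' ≠ ⊥ → W' = W)
    {s : ℕ} (Hs : Fin s → Type*) [∀ i, Group (Hs i)] [∀ i, Finite (Hs i)]
    (H : Subgroup (∀ i, Hs i)) (N : Subgroup H) [N.Normal]
    (e : G ≃* H ⧸ N) :
    ∃ i, Nat.card W ≤ Nat.card (Hs i) :=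
  stmt0_general W hWnormal hWne hWmin Hs H N e
end

section
/- Let p be a prime and G a p-group of order p^(2m+1) whose center Z(G) and commutator subgroup G' both have order p. Then every abelian subgroup of G has order at most p^(m+1). -/
/-!
A normal subgroup of order `p` in a `p`-group is central, since `G` acts on it through
`Aut(C_p)`, a group of order `p - 1`. So `G' ≤ Z(G)`, and `b ↦ (a ↦ ⁅a, b⁆)` is a homomorphism
from `G` into `Hom(G, Z(G))` with kernel `Z(G)`. On a subgroup `A` its image consists of
homomorphisms into the cyclic group `Z(G)` that vanish on `C_G(A)`, and there are at most
`|G : C_G(A)|` of them. Hence `|A| ≤ |G : C_G(A)| p`, and for abelian `A ≤ C_G(A)` this gives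
`|A|² ≤ |A| |G : A| p = p^(2m+2)`.
-/

open Subgroup

open scoped commutatorElement IsMulCommutative

theorem card_monoidHom_le_card_of_isCyclic {H K : Type*} [Group H] [Finite H]
    [CommGroup K] [Finite K] [IsCyclic K] : Nat.card (H →* K) ≤ Nat.card H := by
  have : NeZero (Nat.card K) := ⟨Nat.card_pos.ne'⟩
  -- `K` embeds in `ℂˣ`, where homomorphisms out of a finite abelian group are counted by duality.
  let ι : K →* ℂˣ := (rootsOfUnity (Nat.card K) ℂ).subtype.comp
    (mulEquivOfCyclicCardEq (HasEnoughRootsOfUnity.natCard_rootsOfUnity ℂ _).symm).toMonoidHom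
  have hι : Function.Injective ι := Subtype.val_injective.comp (MulEquiv.injective _)
  have : NeZero (Monoid.exponent (Abelianization H)) := ⟨Monoid.exponent_ne_zero_of_finite⟩
  calc Nat.card (H →* K) = Nat.card (Abelianization H →* K) := Nat.card_congr Abelianization.lift
    _ ≤ Nat.card (Abelianization H →* ℂˣ) :=
      Nat.card_le_card_of_injective (ι.comp ·) fun f g hfg ↦
        MonoidHom.ext fun x ↦ hι (DFunLike.congr_fun hfg x)
    _ = Nat.card (Abelianization H) := CommGroup.card_monoidHom_of_hasEnoughRootsOfUnity _ ℂ
    _ ≤ Nat.card H := Nat.card_le_card_of_surjective _ QuotientGroup.mk_surjective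

theorem Subgroup.card_le_index_of_forall_le_ker {G K : Type*} [Group G] [CommGroup K] [Finite K]
    [IsCyclic K] (N : Subgroup G) [N.Normal] [N.FiniteIndex] (S : Set (G →* K))
    (hS : ∀ f ∈ S, N ≤ f.ker) : Nat.card S ≤ N.index := by
  have : Finite (G ⧸ N →* K) := .of_injective _ DFunLike.coe_injective
  calc Nat.card S ≤ Nat.card (G ⧸ N →* K) :=
        Nat.card_le_card_of_injective (fun f ↦ QuotientGroup.lift N f (hS f f.2))
          fun f g hfg ↦ Subtype.ext <| MonoidHom.ext fun x ↦ DFunLike.congr_fun hfg (x : G ⧸ N)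
    _ ≤ Nat.card (G ⧸ N) := card_monoidHom_le_card_of_isCyclic
    _ = N.index := N.index_eq_card.symm

theorem Subgroup.le_center_of_card_eq_prime {p : ℕ} [Fact p.Prime] {G : Type*} [Group G]
    [Finite G] (hG : IsPGroup p G) (N : Subgroup G) [N.Normal] (hN : Nat.card N = p) :
    N ≤ center G := by
  have : IsCyclic N := isCyclic_of_prime_card hN
  intro n hn
  refine mem_center_iff.mpr fun g ↦ ?_
  have hcard : Nat.card (MulAut N) = p - 1 := by
    rw [IsCyclic.card_mulAut, hN, Nat.totient_prime Fact.out]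
  have hconj : MulAut.conjNormal g = (1 : MulAut N) := by
    rw [← orderOf_eq_one_iff]
    refine Nat.eq_one_of_dvd_coprimes (hG.orderOf_coprime ?_ g) (orderOf_map_dvd _ g)
      (hcard ▸ _root_.orderOf_dvd_natCard _)
    exact (Nat.coprime_self_sub_right (Fact.out : p.Prime).pos).mpr (Nat.coprime_one_right p)
  have := congrArg Subtype.val (DFunLike.congr_fun hconj ⟨n, hn⟩)
  rw [MulAut.conjNormal_apply] at this
  exact mul_inv_eq_iff_eq_mul.mp this

section CentralCommutators

variable {G : Type*} [Group G] (h : commutator G ≤ center G)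
include h

theorem commutatorElement_mem_center (a b : G) : ⁅a, b⁆ ∈ center G :=
  h (commutator_mem_commutator (mem_top a) (mem_top b))

theorem commutatorElement_mul_left_of_le_center (a b c : G) :
    ⁅a * b, c⁆ = ⁅a, c⁆ * ⁅b, c⁆ := by
  rw [commutatorElement_mul_left_eq_conj_mul,
    mem_center_iff.mp (commutatorElement_mem_center h b c) a, mul_inv_cancel_right,
    mem_center_iff.mp (commutatorElement_mem_center h a c)]

theorem commutatorElement_mul_right_of_le_center (a b c : G) :
    ⁅a, b * c⁆ = ⁅a, b⁆ * ⁅a, c⁆ := by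
  rw [commutatorElement_mul_right_eq_mul_conj, mul_assoc _ b,
    mem_center_iff.mp (commutatorElement_mem_center h a c) b, ← mul_assoc, mul_inv_cancel_right]

def commutatorPairing : G →* (G →* center G) where
  toFun b :=
    { toFun a := ⟨⁅a, b⁆, commutatorElement_mem_center h a b⟩
      map_one' := Subtype.ext (commutatorElement_one_left b)
      map_mul' a a' := Subtype.ext (commutatorElement_mul_left_of_le_center h a a' b) }
  map_one' := MonoidHom.ext fun a ↦ Subtype.ext (commutatorElement_one_right a)
  map_mul' b b' := MonoidHom.ext fun a ↦
    Subtype.ext (commutatorElement_mul_right_of_le_center h a b b')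

theorem commutatorPairing_apply_eq_one_iff {a b : G} :
    commutatorPairing h b a = 1 ↔ a * b = b * a := by
  rw [← Subtype.val_inj]
  exact commutatorElement_eq_one_iff_mul_comm

theorem ker_commutatorPairing : (commutatorPairing h).ker = center G := by
  ext b
  simp only [MonoidHom.mem_ker, MonoidHom.ext_iff, MonoidHom.one_apply,
    commutatorPairing_apply_eq_one_iff, mem_center_iff]

theorem card_le_index_centralizer_mul_card_center [Finite G] [IsCyclic (center G)]
    (A : Subgroup G) : Nat.card A ≤ (centralizer (A : Set G)).index * Nat.card (center G) := by
  have : (centralizer (A : Set G)).Normal :=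
    Normal.of_commutator_le (h := h.trans (center_le_centralizer _))
  set Ψ := (commutatorPairing h).comp A.subtype with hΨ
  have hrange : Nat.card Ψ.range ≤ (centralizer (A : Set G)).index := by
    refine card_le_index_of_forall_le_ker _ _ ?_
    rintro _ ⟨a, rfl⟩ c hc
    exact (commutatorPairing_apply_eq_one_iff h).mpr
      (mem_centralizer_iff.mp hc a a.2).symm
  have hker : Nat.card Ψ.ker ≤ Nat.card (center G) := by
    rw [hΨ, ← MonoidHom.comap_ker, ker_commutatorPairing]
    exact Nat.le_of_dvd Nat.card_pos (card_comap_dvd_of_injective _ _ A.subtype_injective)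
  calc Nat.card A = Nat.card Ψ.range * Nat.card Ψ.ker := by
        rw [← index_ker, mul_comm, card_mul_index]
    _ ≤ _ := Nat.mul_le_mul hrange hker

end CentralCommutators

/-- Let `p` be a prime and `G` a `p`-group of order `p^(2m+1)` whose center and
commutator subgroup both have order `p` (an extraspecial group).  Then every
abelian subgroup of `G` has order at most `p^(m+1)`. -/
theorem stmt2 {p m : ℕ} (hp : p.Prime) {G : Type*} [Group G] [Finite G]
    (hcard : Nat.card G = p ^ (2 * m + 1))
    (hZ : Nat.card (Subgroup.center G) = p)
    (hC : Nat.card (commutator G) = p)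
    (A : Subgroup G) (hA : ∀ a b : A, a * b = b * a) :
    Nat.card A ≤ p ^ (m + 1) := by
  have : Fact p.Prime := ⟨hp⟩
  have : IsCyclic (center G) := isCyclic_of_prime_card hZ
  have hcomm : commutator G ≤ center G :=
    le_center_of_card_eq_prime (IsPGroup.of_card hcard) _ hC
  have hAC : A ≤ centralizer (A : Set G) := fun a ha ↦
    mem_centralizer_iff.mpr fun b hb ↦ congrArg Subtype.val (hA ⟨b, hb⟩ ⟨a, ha⟩)
  have hsq : Nat.card A * Nat.card A ≤ p ^ (m + 1) * p ^ (m + 1) :=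
    calc Nat.card A * Nat.card A ≤ Nat.card A * (A.index * p) := by
          gcongr
          exact hZ ▸ (card_le_index_centralizer_mul_card_center hcomm A).trans
            (Nat.mul_le_mul_right _ (index_antitone hAC))
      _ = p ^ (m + 1) * p ^ (m + 1) := by
          rw [← mul_assoc, card_mul_index, hcard]; ring
  exact Nat.mul_self_le_mul_self_iff.mp hsq
end
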